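/- For u ∈ ℝ³ let û denote the 3×3 skew-symmetric matrix with û·v = u × v for all v ∈ ℝ³ (the hat map), and for κ, ε ∈ ℝ³ let ad(κ,ε) denote the 6×6 real block matrix [[κ̂, 0],[ε̂, κ̂]]. Fix a nonzero real number h and Ω ∈ ℝ⁶, and for β ∈ ℝ⁶ set A(β) = h·I₆ − (h³/12)·ad(β). Then the map F : ℝ⁶ → ℝ⁶ defined by F(β) = A(β)⁻¹·Ω is differentiable at every β, and its Fréchet derivative in the direction v ∈ ℝ⁶ is DF(β)[v] = −(h³/12)·A(β)⁻¹·ad(F(β))·v. -/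

import Mathlib

/-!
`F` is matrix inversion composed with the affine map `A` and with `M ↦ M *ᵥ Ω`. As
`DA(β)[v] = -(h³/12) ad(v)` and inversion has derivative `X ↦ -A⁻¹ X A⁻¹`, we get
`DF(β)[v] = (h³/12) A⁻¹ ad(v) F(β)`, and antisymmetry of the bracket, `ad(v) F(β) = -ad(F(β)) v`,
turns this into the stated formula. `A(β)` is invertible because it is block lower triangular with
both diagonal blocks equal to `h I₃ - (h³/12) κ̂`, whose determinant is
`h (h² + (h³/12)² |κ|²) ≠ 0`.
-/

open Matrix

/-- The hat map: `hat u` is the 3×3 skew-symmetric matrix with `hat u *ᵥ v = u × v`. -/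
def hat (u : Fin 3 → ℝ) : Matrix (Fin 3) (Fin 3) ℝ :=
  !![0, -u 2, u 1; u 2, 0, -u 0; -u 1, u 0, 0]

/-- The adjoint matrix of `x ∈ ℝ⁶ ≅ ℝ³ × ℝ³`: the 6×6 block matrix `[[κ̂, 0], [ε̂, κ̂]]`,
where `κ` and `ε` are the two 3-dimensional components of `x`. -/
def adMat (x : Fin 3 ⊕ Fin 3 → ℝ) : Matrix (Fin 3 ⊕ Fin 3) (Fin 3 ⊕ Fin 3) ℝ :=
  Matrix.fromBlocks (hat (x ∘ Sum.inl)) 0 (hat (x ∘ Sum.inr)) (hat (x ∘ Sum.inl))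

theorem hat_mulVec (u v : Fin 3 → ℝ) : hat u *ᵥ v = u ⨯₃ v := by
  ext i
  fin_cases i <;>
    simp only [hat, cross_apply, mulVec, dotProduct, Fin.sum_univ_three, of_apply, cons_val',
      cons_val_fin_one, cons_val_zero, cons_val_one, cons_val, Fin.isValue, Fin.zero_eta,
      Fin.mk_one, Fin.reduceFinMk] <;> ring

theorem adMat_mulVec (x y : Fin 3 ⊕ Fin 3 → ℝ) :
    adMat x *ᵥ y = Sum.elim ((x ∘ Sum.inl) ⨯₃ (y ∘ Sum.inl))
      ((x ∘ Sum.inr) ⨯₃ (y ∘ Sum.inl) + (x ∘ Sum.inl) ⨯₃ (y ∘ Sum.inr)) := by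
  simp only [adMat, fromBlocks_mulVec, hat_mulVec, zero_mulVec, add_zero]

theorem adMat_mulVec_comm (x y : Fin 3 ⊕ Fin 3 → ℝ) : adMat x *ᵥ y = -(adMat y *ᵥ x) := by
  rw [adMat_mulVec, adMat_mulVec]
  ext (i | i)
  · simp only [Sum.elim_inl, Pi.neg_apply, ← cross_anticomm (y ∘ Sum.inl)]
  · simp only [Sum.elim_inr, Pi.neg_apply, Pi.add_apply, ← cross_anticomm (y ∘ Sum.inr),
      ← cross_anticomm (y ∘ Sum.inl)]
    ring

theorem adMat_add (x y : Fin 3 ⊕ Fin 3 → ℝ) : adMat (x + y) = adMat x + adMat y :=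
  ext_iff_mulVec.2 fun z => by
    rw [add_mulVec, adMat_mulVec_comm, mulVec_add, neg_add, ← adMat_mulVec_comm,
      ← adMat_mulVec_comm]

theorem adMat_smul (c : ℝ) (x : Fin 3 ⊕ Fin 3 → ℝ) : adMat (c • x) = c • adMat x :=
  ext_iff_mulVec.2 fun z => by
    rw [smul_mulVec, adMat_mulVec_comm, mulVec_smul, ← smul_neg, ← adMat_mulVec_comm]

@[simps]
def adMatLinearMap : (Fin 3 ⊕ Fin 3 → ℝ) →ₗ[ℝ] Matrix (Fin 3 ⊕ Fin 3) (Fin 3 ⊕ Fin 3) ℝ where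
  toFun := adMat
  map_add' := adMat_add
  map_smul' := adMat_smul

theorem det_smul_one_sub_smul_hat (a c : ℝ) (u : Fin 3 → ℝ) :
    det (a • 1 - c • hat u) = a * (a ^ 2 + c ^ 2 * (u 0 ^ 2 + u 1 ^ 2 + u 2 ^ 2)) := by
  simp only [det_fin_three, hat, Matrix.sub_apply, Matrix.smul_apply, one_apply, of_apply,
    cons_val', cons_val_zero, cons_val_one, cons_val, cons_val_fin_one, Fin.isValue, Fin.reduceEq,
    ↓reduceIte, smul_eq_mul]
  ring

theorem det_smul_one_sub_smul_adMat (a c : ℝ) (x : Fin 3 ⊕ Fin 3 → ℝ) :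
    det (a • 1 - c • adMat x) = det (a • 1 - c • hat (x ∘ Sum.inl)) ^ 2 := by
  rw [adMat, ← fromBlocks_one, fromBlocks_smul, fromBlocks_smul, sub_eq_add_neg, fromBlocks_neg,
    fromBlocks_add]
  simp only [smul_zero, neg_zero, add_zero, ← sub_eq_add_neg]
  rw [det_fromBlocks_zero₁₂, sq]

theorem isUnit_smul_one_sub_smul_adMat {a : ℝ} (ha : a ≠ 0) (c : ℝ) (x : Fin 3 ⊕ Fin 3 → ℝ) :
    IsUnit (a • 1 - c • adMat x) := by
  rw [isUnit_iff_isUnit_det, isUnit_iff_ne_zero, det_smul_one_sub_smul_adMat,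
    det_smul_one_sub_smul_hat]
  simp only [Function.comp_apply]
  positivity

section MatrixInverse

-- Any norm would do; the ℓ∞ operator norm makes `Matrix n n 𝕜` a complete normed algebra, so
-- `hasFDerivAt_ringInverse` applies. The statement of the last lemma does not depend on it.
attribute [local instance] Matrix.linftyOpNormedAddCommGroup Matrix.linftyOpNormedSpace
  Matrix.linftyOpNormedRing Matrix.linftyOpNormedAlgebra

variable {𝕜 E n : Type*} [RCLike 𝕜] [NormedAddCommGroup E]
  [NormedSpace 𝕜 E] [Fintype n] [DecidableEq n]

theorem HasFDerivAt.exists_inv_mulVec {A : E → Matrix n n 𝕜} {A' : E →L[𝕜] Matrix n n 𝕜} {x : E}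
    (hA : HasFDerivAt A A' x) (hx : IsUnit (A x)) (w : n → 𝕜) :
    ∃ D : E →L[𝕜] n → 𝕜, HasFDerivAt (fun y ↦ (A y)⁻¹ *ᵥ w) D x ∧
      ∀ v, D v = -((A x)⁻¹ *ᵥ (A' v *ᵥ ((A x)⁻¹ *ᵥ w))) := by
  obtain ⟨u, hu⟩ := hx
  let mulVecCLM : Matrix n n 𝕜 →L[𝕜] n → 𝕜 :=
    LinearMap.toContinuousLinearMap ((mulVecBilin 𝕜 𝕜).flip w)
  have hinv : HasFDerivAt Ring.inverse (-ContinuousLinearMap.mulLeftRight 𝕜 _ (A x)⁻¹ (A x)⁻¹)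
      (A x) := by
    simpa only [← hu, nonsing_inv_eq_ringInverse, Ring.inverse_unit] using
      hasFDerivAt_ringInverse (𝕜 := 𝕜) u
  refine ⟨_, (mulVecCLM.hasFDerivAt.comp x (hinv.comp x hA)).congr_of_eventuallyEq ?_, ?_⟩
  · exact .of_forall fun y ↦ congrArg (· *ᵥ w) (nonsing_inv_eq_ringInverse (A y))
  · intro v
    -- `ContinuousLinearMap.comp_apply` does not fire through the local norm instances.
    change -((A x)⁻¹ * A' v * (A x)⁻¹) *ᵥ w = _
    rw [neg_mulVec, ← mulVec_mulVec, ← mulVec_mulVec]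

theorem exists_hasFDerivAt_inv_add_mulVec [FiniteDimensional 𝕜 E] (M : Matrix n n 𝕜)
    (L : E →ₗ[𝕜] Matrix n n 𝕜) {x : E} (hx : IsUnit (M + L x)) (w : n → 𝕜) :
    ∃ D : E →L[𝕜] n → 𝕜, HasFDerivAt (fun y ↦ (M + L y)⁻¹ *ᵥ w) D x ∧
      ∀ v, D v = -((M + L x)⁻¹ *ᵥ (L v *ᵥ ((M + L x)⁻¹ *ᵥ w))) :=
  (L.toContinuousLinearMap.hasFDerivAt.const_add M).exists_inv_mulVec hx w

end MatrixInverse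

/-- **Differentiability of the mean-strain reconstruction map (strain-slope Jacobian `J₃`).**
Fix `h ≠ 0` and `Ω ∈ ℝ⁶`, and set `A(β) = h • I₆ − (h³/12) • ad(β)` and `F(β) = A(β)⁻¹ Ω`.
Then `F` is (Fréchet) differentiable at every `β`, with derivative
`DF(β)[v] = −(h³/12) • A(β)⁻¹ (ad(F(β)) v)`. -/
theorem meanStrain_hasFDerivAt
    (h : ℝ) (hh : h ≠ 0) (Ω : Fin 3 ⊕ Fin 3 → ℝ)
    (A : (Fin 3 ⊕ Fin 3 → ℝ) → Matrix (Fin 3 ⊕ Fin 3) (Fin 3 ⊕ Fin 3) ℝ)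
    (hA : ∀ β, A β = h • (1 : Matrix (Fin 3 ⊕ Fin 3) (Fin 3 ⊕ Fin 3) ℝ)
        - (h ^ 3 / 12) • adMat β)
    (F : (Fin 3 ⊕ Fin 3 → ℝ) → (Fin 3 ⊕ Fin 3 → ℝ))
    (hF : ∀ β, F β = (A β)⁻¹ *ᵥ Ω) :
    ∀ β, ∃ D : (Fin 3 ⊕ Fin 3 → ℝ) →L[ℝ] (Fin 3 ⊕ Fin 3 → ℝ),
      HasFDerivAt F D β ∧
      ∀ v, D v = -(h ^ 3 / 12) • ((A β)⁻¹ *ᵥ (adMat (F β) *ᵥ v)) := by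
  intro β
  set c := h ^ 3 / 12
  have hA_affine (b : Fin 3 ⊕ Fin 3 → ℝ) : A b = h • 1 + (-c • adMatLinearMap) b := by
    rw [hA, LinearMap.smul_apply, adMatLinearMap_apply, neg_smul, sub_eq_add_neg]
  have hA_unit : IsUnit (h • 1 + (-c • adMatLinearMap) β) :=
    hA_affine β ▸ hA β ▸ isUnit_smul_one_sub_smul_adMat hh c β
  obtain ⟨D, hD, hDv⟩ := exists_hasFDerivAt_inv_add_mulVec _ _ hA_unit Ω
  simp only [← hA_affine, ← hF] at hD hDv
  refine ⟨D, hD, fun v ↦ ?_⟩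
  rw [hDv, LinearMap.smul_apply, adMatLinearMap_apply, smul_mulVec, adMat_mulVec_comm v,
    mulVec_smul, mulVec_neg, smul_neg, neg_neg, neg_smul]
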